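/- arXiv:2605.30860 — 3 statements merged into one kernel-verified Lean document; each statement's English description precedes it below -/
import Mathlib

section
/- Let s_τ = s₀ exp(-τ/P + √(2τ/P) G) with G ~ N(0,1) and s₀ ≥ 0 fixed. Then the derivative of E[exp(-s_τ/2)] with respect to τ at τ = 0 equals (1/(4P)) exp(-s₀/2) s₀². -/
/-! Write the integrand as `h(X_τ)` with `h x = exp (-(s₀/2) eˣ)` and
`X_τ = -τ/P + √(2τ/P) G`. Since `|h'''| ≤ 13`, the second-order Taylor expansion of `h` at `0`
has a remainder `O(|x|³)`, so `E h(X_τ) = h 0 + h' 0 E X_τ + h'' 0 E X_τ² / 2 + O(E |X_τ|³)`.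
Here `E X_τ = -τ/P`, `E X_τ² = 2τ/P + τ²/P²` and `E |X_τ|³ = O(τ^{3/2})`, so the right derivative
at `0` is `(h'' 0 - h' 0) / P = (s₀/2)² e^{-s₀/2} / P`. -/

open scoped Nat
open Real Set Filter Topology MeasureTheory ProbabilityTheory Asymptotics

lemma abs_sub_le_of_abs_deriv_le_mul_pow {g g' : ℝ → ℝ} {K : ℝ} {n : ℕ}
    (hg : ∀ x, HasDerivAt g (g' x) x) (hb : ∀ x, |g' x| ≤ K * |x| ^ n) (x : ℝ) :
    |g x - g 0| ≤ K * |x| ^ (n + 1) := by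
  have hK : 0 ≤ K := by simpa using (abs_nonneg _).trans (hb 1)
  have hbx : ∀ y ∈ uIcc 0 x, ‖g' y‖ ≤ K * |x| ^ n := fun y hy => by
    have hyx : |y| ≤ |x| := by simpa using abs_sub_left_of_mem_uIcc hy
    exact (hb y).trans (by gcongr)
  have hmvt := (convex_uIcc 0 x).norm_image_sub_le_of_norm_hasDerivWithin_le
    (fun y _ => (hg y).hasDerivWithinAt) hbx left_mem_uIcc right_mem_uIcc
  simpa [pow_succ, mul_assoc] using hmvt

lemma abs_sub_taylor_two_le {f f' f'' f''' : ℝ → ℝ} {C : ℝ}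
    (hf : ∀ x, HasDerivAt f (f' x) x) (hf' : ∀ x, HasDerivAt f' (f'' x) x)
    (hf'' : ∀ x, HasDerivAt f'' (f''' x) x) (hC : ∀ x, |f''' x| ≤ C) (x : ℝ) :
    |f x - (f 0 + f' 0 * x + f'' 0 * x ^ 2 / 2)| ≤ C * |x| ^ 3 := by
  have h2 (y : ℝ) : |f'' y - f'' 0| ≤ C * |y| ^ 1 :=
    abs_sub_le_of_abs_deriv_le_mul_pow hf'' (by simpa using hC) y
  have h1 (y : ℝ) : |f' y - f' 0 - f'' 0 * y| ≤ C * |y| ^ 2 := by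
    have hrem := abs_sub_le_of_abs_deriv_le_mul_pow (g := fun y => f' y - f'' 0 * y)
      (fun y => by
        simpa only [mul_one] using (hf' y).fun_sub ((hasDerivAt_id' y).const_mul (f'' 0))) h2 y
    convert hrem using 2; ring
  have hrem := abs_sub_le_of_abs_deriv_le_mul_pow
    (g := fun y => f y - f' 0 * y - f'' 0 * y ^ 2 / 2) (fun y => ?_) h1 x
  · convert hrem using 2; ring
  · refine (((hf y).fun_sub ((hasDerivAt_id' y).const_mul (f' 0))).fun_sub
      (((hasDerivAt_pow 2 y).const_mul (f'' 0)).div_const 2)).congr_deriv ?_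
    norm_num
    ring

lemma pow_mul_exp_neg_le_factorial {u : ℝ} (hu : 0 ≤ u) (n : ℕ) :
    u ^ n * exp (-u) ≤ n.factorial := by
  rw [exp_neg, ← div_eq_mul_inv, div_le_iff₀ (exp_pos u), mul_comm, ← div_le_iff₀ (by positivity)]
  exact pow_div_factorial_le_exp u hu n

lemma abs_exp_neg_mul_exp_sub_taylor_le {a : ℝ} (ha : 0 ≤ a) (x : ℝ) :
    |exp (-(a * exp x)) - (exp (-a) + -a * exp (-a) * x + (a ^ 2 - a) * exp (-a) * x ^ 2 / 2)|
      ≤ 13 * |x| ^ 3 := by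
  set u : ℝ → ℝ := fun x => a * exp x
  have hu (x : ℝ) : HasDerivAt u (u x) x := (hasDerivAt_exp x).const_mul a
  have hE (x : ℝ) : HasDerivAt (fun x => exp (-u x)) (-u x * exp (-u x)) x := by
    simpa only [mul_comm] using (hu x).fun_neg.exp
  have h1 (x : ℝ) : HasDerivAt (fun x => -u x * exp (-u x)) ((u x ^ 2 - u x) * exp (-u x)) x :=
    ((hu x).fun_neg.fun_mul (hE x)).congr_deriv (by ring)
  have h2 (x : ℝ) : HasDerivAt (fun x => (u x ^ 2 - u x) * exp (-u x))
      ((-u x ^ 3 + 3 * u x ^ 2 - u x) * exp (-u x)) x :=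
    ((((hu x).fun_pow 2).fun_sub (hu x)).fun_mul (hE x)).congr_deriv (by push_cast; ring)
  have h3 (x : ℝ) : |(-u x ^ 3 + 3 * u x ^ 2 - u x) * exp (-u x)| ≤ 13 := by
    have hu0 : 0 ≤ u x := by positivity
    rw [abs_mul, abs_of_pos (exp_pos _)]
    calc |-u x ^ 3 + 3 * u x ^ 2 - u x| * exp (-u x)
        ≤ (u x ^ 3 + 3 * u x ^ 2 + u x) * exp (-u x) := by
          gcongr
          rw [abs_le]
          constructor <;> nlinarith
      _ = u x ^ 3 * exp (-u x) + 3 * (u x ^ 2 * exp (-u x)) + u x ^ 1 * exp (-u x) := by ring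
      _ ≤ (3 : ℕ)! + 3 * (2 : ℕ)! + (1 : ℕ)! := by
          gcongr <;> exact pow_mul_exp_neg_le_factorial hu0 _
      _ = 13 := by norm_num [Nat.factorial]
  simpa [u] using abs_sub_taylor_two_le hE h1 h2 h3 x

lemma abs_integral_sub_taylor_le {Ω : Type*} [MeasurableSpace Ω] {μ : Measure Ω}
    [IsProbabilityMeasure μ] {f : ℝ → ℝ} {f₀ f₁ f₂ C : ℝ} {X : Ω → ℝ} (hf : Continuous f)
    (hT : ∀ x, |f x - (f₀ + f₁ * x + f₂ * x ^ 2 / 2)| ≤ C * |x| ^ 3) (hX : MemLp X 3 μ) :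
    |∫ ω, f (X ω) ∂μ - (f₀ + f₁ * ∫ ω, X ω ∂μ + f₂ * (∫ ω, X ω ^ 2 ∂μ) / 2)|
      ≤ C * ∫ ω, |X ω| ^ 3 ∂μ := by
  have iX : Integrable X μ := hX.integrable (by norm_num)
  have iX2 : Integrable (fun ω => X ω ^ 2) μ := (hX.mono_exponent (by norm_num)).integrable_sq
  have iX3 : Integrable (fun ω => |X ω| ^ 3) μ := by
    simpa using hX.integrable_norm_pow (p := 3) (by norm_num)
  have iT : Integrable (fun ω => f₀ + f₁ * X ω + f₂ * X ω ^ 2 / 2) μ :=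
    ((integrable_const f₀).fun_add (iX.const_mul f₁)).fun_add ((iX2.const_mul f₂).div_const 2)
  have iR : Integrable (fun ω => f (X ω) - (f₀ + f₁ * X ω + f₂ * X ω ^ 2 / 2)) μ :=
    (iX3.const_mul C).mono' ((hf.comp_aestronglyMeasurable hX.1).sub iT.1)
      (Eventually.of_forall fun ω => hT (X ω))
  have hET : ∫ ω, f₀ + f₁ * X ω + f₂ * X ω ^ 2 / 2 ∂μ
      = f₀ + f₁ * ∫ ω, X ω ∂μ + f₂ * (∫ ω, X ω ^ 2 ∂μ) / 2 := by
    rw [integral_add ((integrable_const f₀).fun_add (iX.const_mul f₁))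
        ((iX2.const_mul f₂).div_const 2),
      integral_add (integrable_const f₀) (iX.const_mul f₁), integral_div, integral_const_mul,
      integral_const_mul, integral_const, probReal_univ, one_smul]
  have iFX : Integrable (fun ω => f (X ω)) μ := by simpa using iR.fun_add iT
  calc |∫ ω, f (X ω) ∂μ - (f₀ + f₁ * ∫ ω, X ω ∂μ + f₂ * (∫ ω, X ω ^ 2 ∂μ) / 2)|
      = |∫ ω, f (X ω) - (f₀ + f₁ * X ω + f₂ * X ω ^ 2 / 2) ∂μ| := by
        rw [integral_sub iFX iT, hET]
    _ ≤ ∫ ω, |f (X ω) - (f₀ + f₁ * X ω + f₂ * X ω ^ 2 / 2)| ∂μ := abs_integral_le_integral_abs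
    _ ≤ ∫ ω, C * |X ω| ^ 3 ∂μ :=
        integral_mono iR.abs (iX3.const_mul C) fun ω => hT (X ω)
    _ = C * ∫ ω, |X ω| ^ 3 ∂μ := integral_const_mul C _

-- `c ≤ 2` gives `|-(c²/2) + c x| ≤ c (|x| + 1)`, which makes every error term `O(c³)`.
lemma abs_integral_comp_affine_sub_le {μ : Measure ℝ} [IsProbabilityMeasure μ]
    (hμ : MemLp id 3 μ) (hmean : ∫ x, x ∂μ = 0) (hvar : ∫ x, x ^ 2 ∂μ = 1)
    {f : ℝ → ℝ} {f₀ f₁ f₂ C : ℝ} (hf : Continuous f)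
    (hT : ∀ x, |f x - (f₀ + f₁ * x + f₂ * x ^ 2 / 2)| ≤ C * |x| ^ 3) {c : ℝ} (hc₀ : 0 ≤ c)
    (hc₂ : c ≤ 2) :
    |∫ x, f (-(c ^ 2 / 2) + c * x) ∂μ - (f₀ + (f₂ - f₁) * c ^ 2 / 2)|
      ≤ (|f₂| + C * ∫ x, (|x| + 1) ^ 3 ∂μ) * c ^ 3 := by
  have hC : 0 ≤ C := by simpa using (abs_nonneg _).trans (hT 1)
  have iX : Integrable (fun x : ℝ => x) μ := hμ.integrable (by norm_num)
  have iX2 : Integrable (fun x : ℝ => x ^ 2) μ := (hμ.mono_exponent (by norm_num)).integrable_sq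
  have iM : Integrable (fun x : ℝ => (|x| + 1) ^ 3) μ := by
    refine ((hμ.abs.add (memLp_const 1)).integrable_norm_pow (p := 3) (by norm_num)).congr
      (ae_of_all _ fun x => ?_)
    simp only [Pi.add_apply, Pi.abs_apply, id_eq, Real.norm_eq_abs]
    rw [abs_of_nonneg (by positivity : (0:ℝ) ≤ |x| + 1)]
  have hX : MemLp (fun x => -(c ^ 2 / 2) + c * x) 3 μ := by
    -- with the literal shift `-(c ^ 2 / 2)` in place, unification times out unfolding `c ^ 2`
    have hX' (k : ℝ) : MemLp (fun x => k + c * x) 3 μ := (memLp_const k).add (hμ.const_mul c)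
    exact hX' _
  have hEX : ∫ x, -(c ^ 2 / 2) + c * x ∂μ = -(c ^ 2 / 2) := by
    rw [integral_add (integrable_const _) (iX.const_mul c), integral_const_mul, hmean]
    simp
  have hEX2 : ∫ x, (-(c ^ 2 / 2) + c * x) ^ 2 ∂μ = c ^ 4 / 4 + c ^ 2 := by
    have hsq : (fun x => (-(c ^ 2 / 2) + c * x) ^ 2)
        = fun x => c ^ 4 / 4 + (c ^ 2 * x ^ 2 + -c ^ 3 * x) := by
      funext x; ring
    rw [hsq, integral_add (integrable_const _) ((iX2.const_mul _).fun_add (iX.const_mul _)),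
      integral_add (iX2.const_mul _) (iX.const_mul _), integral_const_mul, integral_const_mul,
      hmean, hvar]
    simp
  have hEX3 : ∫ x, |-(c ^ 2 / 2) + c * x| ^ 3 ∂μ ≤ c ^ 3 * ∫ x, (|x| + 1) ^ 3 ∂μ := by
    rw [← integral_const_mul]
    refine integral_mono (by simpa using hX.integrable_norm_pow (p := 3) (by norm_num))
      (iM.const_mul _) fun x => ?_
    have hlin : |-(c ^ 2 / 2) + c * x| ≤ c * (|x| + 1) :=
      calc |-(c ^ 2 / 2) + c * x| ≤ |-(c ^ 2 / 2)| + |c * x| := abs_add_le _ _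
        _ = c ^ 2 / 2 + c * |x| := by rw [abs_neg, abs_of_nonneg (by positivity), abs_mul,
              abs_of_nonneg hc₀]
        _ ≤ c * (|x| + 1) := by nlinarith
    calc |-(c ^ 2 / 2) + c * x| ^ 3 ≤ (c * (|x| + 1)) ^ 3 :=
          pow_le_pow_left₀ (abs_nonneg _) hlin 3
      _ = c ^ 3 * (|x| + 1) ^ 3 := by ring
  have key := abs_integral_sub_taylor_le hf hT hX
  rw [hEX, hEX2] at key
  calc |∫ x, f (-(c ^ 2 / 2) + c * x) ∂μ - (f₀ + (f₂ - f₁) * c ^ 2 / 2)|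
      = |(∫ x, f (-(c ^ 2 / 2) + c * x) ∂μ
          - (f₀ + f₁ * -(c ^ 2 / 2) + f₂ * (c ^ 4 / 4 + c ^ 2) / 2)) + f₂ * (c ^ 4 / 8)| := by
        ring_nf
    _ ≤ C * (c ^ 3 * ∫ x, (|x| + 1) ^ 3 ∂μ) + |f₂| * c ^ 3 := by
        refine (abs_add_le _ _).trans (add_le_add (key.trans (by gcongr)) ?_)
        rw [abs_mul, abs_of_nonneg (by positivity : 0 ≤ c ^ 4 / 8)]
        gcongr
        nlinarith [pow_nonneg hc₀ 3]
    _ = (|f₂| + C * ∫ x, (|x| + 1) ^ 3 ∂μ) * c ^ 3 := by ring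

lemma hasDerivWithinAt_Ici_of_abs_sub_le {F : ℝ → ℝ} {L K : ℝ}
    (h : ∀ᶠ τ in 𝓝[≥] 0, |F τ - F 0 - τ * L| ≤ K * (τ * √τ)) :
    HasDerivWithinAt F L (Ici 0) 0 := by
  rw [hasDerivWithinAt_iff_isLittleO]
  simp only [sub_zero, smul_eq_mul]
  have hbig : (fun τ => F τ - F 0 - τ * L) =O[𝓝[≥] 0] fun τ => τ * √τ :=
    IsBigO.of_bound |K| (h.mono fun τ hτ => by
      simpa only [Real.norm_eq_abs, ← abs_mul] using hτ.trans (le_abs_self _))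
  have hsqrt : (fun τ : ℝ => √τ) =o[𝓝[≥] 0] fun _ => (1 : ℝ) :=
    (isLittleO_one_iff ℝ).2 <| by
      simpa using (continuous_sqrt.tendsto 0).mono_left nhdsWithin_le_nhds
  simpa using hbig.trans_isLittleO ((isBigO_refl (fun τ : ℝ => τ) _).mul_isLittleO hsqrt)

lemma hasDerivWithinAt_integral_comp_diffusion {μ : Measure ℝ} [IsProbabilityMeasure μ]
    (hμ : MemLp id 3 μ) (hmean : ∫ x, x ∂μ = 0) (hvar : ∫ x, x ^ 2 ∂μ = 1)
    {f : ℝ → ℝ} {f₀ f₁ f₂ C : ℝ} (hf : Continuous f)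
    (hT : ∀ x, |f x - (f₀ + f₁ * x + f₂ * x ^ 2 / 2)| ≤ C * |x| ^ 3) {P : ℝ} (hP : 0 < P) :
    HasDerivWithinAt (fun τ => ∫ x, f (-(τ / P) + √(2 * τ / P) * x) ∂μ) ((f₂ - f₁) / P)
      (Ici 0) 0 := by
  have hf₀ : f 0 = f₀ := by simpa [sub_eq_zero] using hT 0
  refine hasDerivWithinAt_Ici_of_abs_sub_le
    (K := (|f₂| + C * ∫ x, (|x| + 1) ^ 3 ∂μ) * (2 / P * √(2 / P))) ?_
  filter_upwards [self_mem_nhdsWithin,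
    nhdsWithin_le_nhds (Iio_mem_nhds (by positivity : 0 < 2 * P))]
    with τ (hτ : 0 ≤ τ) (hτP : τ < 2 * P)
  set c := √(2 * τ / P) with hc
  have hc₀ : 0 ≤ c := sqrt_nonneg _
  have hc2 : c ^ 2 = 2 * τ / P := sq_sqrt (by positivity)
  have hc₂ : c ≤ 2 := by
    have : 2 * τ / P < 4 := by rw [div_lt_iff₀ hP]; linarith
    nlinarith
  have hτc : τ / P = c ^ 2 / 2 := by rw [hc2]; ring
  have hc3 : c ^ 3 = 2 / P * √(2 / P) * (τ * √τ) := by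
    rw [pow_succ, hc2, hc, show 2 * τ / P = 2 / P * τ by ring, sqrt_mul (by positivity)]
    ring
  have hL : τ * ((f₂ - f₁) / P) = (f₂ - f₁) * c ^ 2 / 2 := by
    rw [hc2]; field_simp
  have hF0 : ∫ x, f (-(0 / P) + √(2 * 0 / P) * x) ∂μ = f₀ := by simp [hf₀]
  rw [hF0, sub_sub, hL, hτc, mul_assoc, ← hc3]
  exact abs_integral_comp_affine_sub_le hμ hmean hvar hf hT hc₀ hc₂

/-- With `s_τ = s₀ exp(−τ/P + √(2τ/P) G)`, `G ~ N(0,1)` and `s₀ ≥ 0` fixed, the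
(one-sided) derivative of `E[exp(−s_τ/2)]` in `τ` at `τ = 0` equals
`(1/(4P)) exp(−s₀/2) s₀²`. -/
theorem stmt3 (P s₀ : ℝ) (hP : 0 < P) (hs₀ : 0 ≤ s₀) :
    HasDerivWithinAt
      (fun τ : ℝ => ∫ g : ℝ,
        Real.exp (-(s₀ * Real.exp (-(τ / P) + Real.sqrt (2 * τ / P) * g)) / 2)
          ∂(gaussianReal 0 1))
      ((1 / (4 * P)) * Real.exp (-s₀ / 2) * s₀ ^ 2)
      (Set.Ici (0 : ℝ)) 0 := by
  have hvar : ∫ x, x ^ 2 ∂gaussianReal 0 1 = 1 := by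
    rw [← variance_of_integral_eq_zero measurable_id'.aemeasurable integral_id_gaussianReal]
    simp
  have key := hasDerivWithinAt_integral_comp_diffusion (memLp_id_gaussianReal' 3 (by simp))
    integral_id_gaussianReal hvar (by fun_prop)
    (abs_exp_neg_mul_exp_sub_taylor_le (a := s₀ / 2) (by positivity)) hP
  convert key using 1
  · simp only [neg_div, mul_div_right_comm]
  · rw [neg_div]
    field_simp
    ring
end

section
/- Let Φ̄ be a (P+1)×(P+1) symmetric positive semidefinite matrix partitioned into blocks Φ̄_pp ∈ ℝ^{P×P}, Φ̄_pκ ∈ ℝ^{P}, Φ̄_κκ ∈ ℝ, let β > 0, A = (1/β)I_P + Φ̄_pp, and Y ∈ ℝ^P. Then for all κ ∈ ℝ, ∫_{ℝ^P} exp(−(1/(2β))‖p‖² + i pᵀY − (1/2) vᵀ Φ̄ v) dp, with v = (p, κ), equals (2π)^{P/2} det(A)^{-1/2} exp(−(1/2) Yᵀ A^{-1} Y − i κ Φ̄_κp A^{-1} Y − (1/2) κ² (Φ̄_κκ − Φ̄_κp A^{-1} Φ̄_pκ)). -/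
/-!
With `w = iY − κ Φ̄_pκ` the exponent is `−½ pᵀAp + wᵀp − ½κ²Φ̄_κκ`, and `A` is positive definite.
A matrix `C` with `CᵀAC = 1` (e.g. `C = A^{-1/2}`) whitens the quadratic form: substituting
`p = Cq` turns the integral into `|det C|` times a product of one-dimensional Gaussian integrals
with complex linear terms, i.e. `(2π)^{P/2} |det C| exp(½ wᵀCCᵀw)`. Since `CCᵀ = A⁻¹` and
`(det C)² det A = 1`, this is `(2π)^{P/2} det(A)^{-1/2} exp(½ wᵀA⁻¹w)`, and expanding `wᵀA⁻¹w`
(using the symmetry of `A⁻¹`) gives the formula.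
-/

open MeasureTheory Matrix Complex Real

namespace Matrix

variable {ι : Type*} [Fintype ι]

theorem posSemidef_of_isSymm_of_dotProduct_mulVec_nonneg {M : Matrix ι ι ℝ} (hM : M.IsSymm)
    (hnonneg : ∀ x, 0 ≤ x ⬝ᵥ M *ᵥ x) : M.PosSemidef :=
  posSemidef_iff_dotProduct_mulVec.mpr
    ⟨by simpa [IsHermitian, conjTranspose_eq_transpose_of_trivial] using hM.eq,
      fun x ↦ by simpa using hnonneg x⟩

theorem ofReal_dotProduct_mulVec (x y : ι → ℝ) (M : Matrix ι ι ℝ) :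
    ((x ⬝ᵥ M *ᵥ y : ℝ) : ℂ) = (ofReal ∘ x) ⬝ᵥ M.map ofReal *ᵥ (ofReal ∘ y) := by
  simp [dotProduct, mulVec]

theorem IsSymm.ofReal_dotProduct_mulVec_smul_sub_smul {M : Matrix ι ι ℝ} (hM : M.IsSymm)
    (a b : ℂ) (u v : ι → ℝ) :
    (a • (ofReal ∘ u) - b • (ofReal ∘ v)) ⬝ᵥ M.map ofReal *ᵥ (a • (ofReal ∘ u) - b • (ofReal ∘ v))
      = a ^ 2 * ↑(u ⬝ᵥ M *ᵥ u) - 2 * a * b * ↑(v ⬝ᵥ M *ᵥ u) + b ^ 2 * ↑(v ⬝ᵥ M *ᵥ v) := by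
  have hcross : u ⬝ᵥ M *ᵥ v = v ⬝ᵥ M *ᵥ u := by
    rw [dotProduct_mulVec, ← mulVec_transpose, hM.eq, dotProduct_comm]
  simp only [sub_dotProduct, dotProduct_sub, mulVec_sub, smul_dotProduct, dotProduct_smul,
    mulVec_smul, smul_eq_mul, ← ofReal_dotProduct_mulVec]
  rw [hcross]
  ring

theorem integral_comp_mulVec [DecidableEq ι] {E : Type*} [NormedAddCommGroup E]
    [NormedSpace ℝ E] {M : Matrix ι ι ℝ} (hM : M.det ≠ 0) (g : (ι → ℝ) → E) :
    ∫ q, g (M *ᵥ q) = |M.det|⁻¹ • ∫ p, g p := by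
  have hdet : LinearMap.det (toLin' M) ≠ 0 := by rwa [LinearMap.det_toLin']
  have hemb : MeasurableEmbedding (toLin' M) :=
    (M.toLinearEquiv' (M.invertibleOfIsUnitDet hM.isUnit)).toContinuousLinearEquiv.toHomeomorph
      |>.measurableEmbedding
  calc ∫ q, g (M *ᵥ q) = ∫ p, g p ∂(Measure.map (toLin' M) volume) :=
        (hemb.integral_map g).symm
    _ = |M.det|⁻¹ • ∫ p, g p := by
      rw [Real.map_linearMap_volume_pi_eq_smul_volume_pi hdet, integral_smul_measure,
        LinearMap.det_toLin', ENNReal.toReal_ofReal (abs_nonneg _), abs_inv]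

theorem integral_cexp_neg_half_dotProduct_self_add (w : ι → ℂ) :
    ∫ q : ι → ℝ, cexp (-(1 / 2) * ↑(q ⬝ᵥ q) + ∑ i, w i * q i)
      = ↑((2 * π) ^ ((Fintype.card ι : ℝ) / 2)) * cexp ((1 / 2) * (w ⬝ᵥ w)) := by
  have hsq (q : ι → ℝ) : ((q ⬝ᵥ q : ℝ) : ℂ) = ∑ i, (q i : ℂ) ^ 2 := by
    push_cast [dotProduct, sq]; rfl
  simp_rw [hsq]
  rw [GaussianFourier.integral_cexp_neg_mul_sum_add (by norm_num) w,
    ofReal_cpow (by positivity)]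
  congr 1
  · push_cast; ring_nf
  · congr 1; simp only [dotProduct, sq]; ring

theorem integral_cexp_neg_half_quadForm_add_of_transpose_mul_mul_eq_one [DecidableEq ι]
    {A C : Matrix ι ι ℝ} (hC : Cᵀ * A * C = 1) (w : ι → ℂ) :
    ∫ p : ι → ℝ, cexp (-(1 / 2) * ↑(p ⬝ᵥ A *ᵥ p) + ∑ i, w i * p i)
      = ↑(|C.det| * (2 * π) ^ ((Fintype.card ι : ℝ) / 2))
        * cexp ((1 / 2) * (w ⬝ᵥ (C * Cᵀ).map ofReal *ᵥ w)) := by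
  have hdetC : C.det ≠ 0 := fun h ↦ by simpa [h] using congrArg det hC
  set Cc := C.map ofReal
  have hquad (q : ι → ℝ) : (C *ᵥ q) ⬝ᵥ A *ᵥ (C *ᵥ q) = q ⬝ᵥ q := by
    rw [mulVec_mulVec, dotProduct_mulVec, vecMul_mulVec, ← Matrix.mul_assoc, hC, vecMul_one]
  have hlin (q : ι → ℝ) : ∑ i, w i * ((C *ᵥ q) i : ℂ) = ∑ i, (w ᵥ* Cc) i * q i := by
    change w ⬝ᵥ (ofReal ∘ (C *ᵥ q)) = (w ᵥ* Cc) ⬝ᵥ (ofReal ∘ q)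
    rw [← dotProduct_mulVec]
    congr 1
    funext i
    exact RingHom.map_mulVec ofRealHom C q i
  have hsq : (w ᵥ* Cc) ⬝ᵥ (w ᵥ* Cc) = w ⬝ᵥ (C * Cᵀ).map ofReal *ᵥ w := by
    have hmap : (C * Cᵀ).map ofReal = Cc * Ccᵀ := by
      ext i j; simp [Cc, Matrix.mul_apply]
    rw [hmap, ← mulVec_mulVec, dotProduct_mulVec, mulVec_transpose]
  rw [← smul_right_inj (inv_ne_zero (abs_ne_zero.mpr hdetC)), ← integral_comp_mulVec hdetC]
  simp_rw [hquad, hlin]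
  rw [integral_cexp_neg_half_dotProduct_self_add, hsq, Complex.real_smul, ofReal_mul,
    ← mul_assoc, ← mul_assoc, ← ofReal_mul, inv_mul_cancel₀ (abs_ne_zero.mpr hdetC), ofReal_one,
    one_mul]

open scoped MatrixOrder in
theorem PosDef.exists_transpose_mul_mul_eq_one [DecidableEq ι] {A : Matrix ι ι ℝ}
    (hA : A.PosDef) : ∃ C : Matrix ι ι ℝ, Cᵀ * A * C = 1 := by
  refine ⟨CFC.sqrt A⁻¹, ?_⟩
  have hsymm : (CFC.sqrt A⁻¹)ᵀ = CFC.sqrt A⁻¹ := by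
    simpa [conjTranspose_eq_transpose_of_trivial] using (CFC.sqrt_nonneg A⁻¹).posSemidef.1.eq
  have hsq : CFC.sqrt A⁻¹ * CFC.sqrt A⁻¹ = A⁻¹ :=
    CFC.sqrt_mul_sqrt_self _ hA.inv.posSemidef.nonneg
  rw [hsymm, mul_eq_one_comm, ← Matrix.mul_assoc, hsq,
    nonsing_inv_mul _ ((isUnit_iff_isUnit_det A).mp hA.isUnit)]

theorem PosDef.integral_cexp_neg_half_quadForm_add [DecidableEq ι] {A : Matrix ι ι ℝ}
    (hA : A.PosDef) (w : ι → ℂ) :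
    ∫ p : ι → ℝ, cexp (-(1 / 2) * ↑(p ⬝ᵥ A *ᵥ p) + ∑ i, w i * p i)
      = ↑((2 * π) ^ ((Fintype.card ι : ℝ) / 2) * A.det ^ (-(1 : ℝ) / 2))
        * cexp ((1 / 2) * (w ⬝ᵥ A⁻¹.map ofReal *ᵥ w)) := by
  obtain ⟨C, hC⟩ := hA.exists_transpose_mul_mul_eq_one
  have hinv : C * Cᵀ = A⁻¹ := by
    refine (inv_eq_right_inv ?_).symm
    rw [← Matrix.mul_assoc, mul_eq_one_comm, ← Matrix.mul_assoc, hC]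
  have hdet : |C.det| = A.det ^ (-(1 : ℝ) / 2) := by
    have h := congrArg det hC
    rw [det_mul, det_mul, det_transpose, det_one] at h
    rw [neg_div, Real.rpow_neg hA.det_pos.le, ← Real.sqrt_eq_rpow]
    refine eq_inv_of_mul_eq_one_left ?_
    rw [← Real.sqrt_sq_eq_abs, ← Real.sqrt_mul (sq_nonneg _), ← Real.sqrt_one]
    congr 1
    linear_combination h
  rw [integral_cexp_neg_half_quadForm_add_of_transpose_mul_mul_eq_one hC, hinv, hdet,
    mul_comm (A.det ^ _)]

end Matrix

theorem cexp_kernel_exponent_eq {P : ℕ} {Φpp : Matrix (Fin P) (Fin P) ℝ} {Φpκ : Fin P → ℝ}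
    {Φκκ β : ℝ} (Y : Fin P → ℝ) {A : Matrix (Fin P) (Fin P) ℝ}
    (hA : A = β⁻¹ • (1 : Matrix (Fin P) (Fin P) ℝ) + Φpp) (κ : ℝ) (p : Fin P → ℝ) :
    cexp (ofReal (-(1 / (2 * β)) * (p ⬝ᵥ p)) + I * ofReal (p ⬝ᵥ Y)
        - ofReal ((1 / 2) * (p ⬝ᵥ Φpp *ᵥ p + 2 * κ * (p ⬝ᵥ Φpκ) + κ ^ 2 * Φκκ)))
      = cexp (-(1 / 2) * ↑(p ⬝ᵥ A *ᵥ p)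
          + ∑ i, (I • (ofReal ∘ Y) - (κ : ℂ) • (ofReal ∘ Φpκ)) i * p i)
        * cexp (-(1 / 2) * κ ^ 2 * Φκκ) := by
  have hlin : ∑ i, (I • (ofReal ∘ Y) - (κ : ℂ) • (ofReal ∘ Φpκ)) i * p i
      = I * ↑(p ⬝ᵥ Y) - κ * ↑(p ⬝ᵥ Φpκ) := by
    simp only [dotProduct, Pi.sub_apply, Pi.smul_apply, Function.comp_apply, smul_eq_mul,
      ofReal_sum, ofReal_mul, Finset.mul_sum, ← Finset.sum_sub_distrib]
    exact Finset.sum_congr rfl fun i _ ↦ by ring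
  rw [← Complex.exp_add, hlin, hA, add_mulVec, dotProduct_add, smul_mulVec, one_mulVec,
    dotProduct_smul, smul_eq_mul]
  congr 1
  push_cast
  field_simp
  ring

/-- Closed-form kernel-method partition function. Let `Φ̄` be a `(P+1)×(P+1)` symmetric
PSD matrix with blocks `Φpp, Φpκ, Φκκ`, `β > 0`, `A = β⁻¹ I + Φpp`, `Y ∈ ℝ^P`. Then for
all `κ ∈ ℝ`, `∫ exp(−(1/(2β))‖p‖² + ipᵀY − ½ vᵀΦ̄v) dp` with `v = (p, κ)` equals
`(2π)^{P/2} det(A)^{-1/2} exp(−½YᵀA⁻¹Y − iκ Φ̄κp A⁻¹Y − ½κ²(Φ̄κκ − Φ̄κp A⁻¹ Φ̄pκ))`. -/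
theorem stmt5 (P : ℕ) (Φpp : Matrix (Fin P) (Fin P) ℝ) (Φpκ : Fin P → ℝ) (Φκκ : ℝ)
    (hsymm : Φpp.IsSymm)
    (hPSD : ∀ (p : Fin P → ℝ) (κ : ℝ),
      0 ≤ p ⬝ᵥ Φpp *ᵥ p + 2 * κ * (p ⬝ᵥ Φpκ) + κ ^ 2 * Φκκ)
    (β : ℝ) (hβ : 0 < β) (Y : Fin P → ℝ)
    (A : Matrix (Fin P) (Fin P) ℝ)
    (hA : A = β⁻¹ • (1 : Matrix (Fin P) (Fin P) ℝ) + Φpp) :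
    ∀ κ : ℝ,
      (∫ p : Fin P → ℝ,
        Complex.exp (Complex.ofReal (-(1 / (2 * β)) * (p ⬝ᵥ p))
          + Complex.I * Complex.ofReal (p ⬝ᵥ Y)
          - Complex.ofReal ((1 / 2) *
              (p ⬝ᵥ Φpp *ᵥ p + 2 * κ * (p ⬝ᵥ Φpκ) + κ ^ 2 * Φκκ))))
      = Complex.ofReal ((2 * Real.pi) ^ ((P : ℝ) / 2) * A.det ^ (-(1 : ℝ) / 2)) *
        Complex.exp (Complex.ofReal (-(1 / 2) * (Y ⬝ᵥ A⁻¹ *ᵥ Y))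
          - Complex.I * Complex.ofReal (κ * (Φpκ ⬝ᵥ A⁻¹ *ᵥ Y))
          - Complex.ofReal ((1 / 2) * κ ^ 2 * (Φκκ - Φpκ ⬝ᵥ A⁻¹ *ᵥ Φpκ))) := by
  intro κ
  have hΦ : Φpp.PosSemidef :=
    posSemidef_of_isSymm_of_dotProduct_mulVec_nonneg hsymm fun p ↦ by simpa using hPSD p 0
  have hApd : A.PosDef := hA ▸ (PosDef.one.smul (inv_pos.mpr hβ)).add_posSemidef hΦ
  have hAinv : A⁻¹.IsSymm := (hA ▸ (isSymm_one.smul β⁻¹).add hsymm : A.IsSymm).inv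
  simp_rw [cexp_kernel_exponent_eq Y hA κ]
  rw [integral_mul_const, hApd.integral_cexp_neg_half_quadForm_add,
    hAinv.ofReal_dotProduct_mulVec_smul_sub_smul, I_sq, Fintype.card_fin, mul_assoc,
    ← Complex.exp_add]
  congr 2
  push_cast
  ring
end

section
/- Under the shaped-ReLU Neural Covariance SDE drift b(Φ) = D^{1/2} ρ(D^{-1/2} Φ D^{-1/2}) D^{1/2} with ρ as above and D = diag(Φ), the diagonal entries satisfy b(Φ)_{αα} = 0 for all α; hence under the SDE dΦ_t = α b(Φ_t) dt + Φ_t^{1/2} dB_t Φ_t^{1/2}, each diagonal entry (Φ_t)_{αα} is a driftless geometric Brownian motion. -/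
open MeasureTheory

/-- Elementary matrix direction `E_{ij}`. -/
noncomputable def stdBasisM (P : ℕ) (i j : Fin P) : Fin P → Fin P → ℝ :=
  fun a b => if a = i ∧ b = j then 1 else 0

/-- Generator of the matrix SDE `dΦ = α b(Φ) dt + Φ^{1/2} dB Φ^{1/2}`. -/
noncomputable def matGen (P : ℕ) (α : ℝ)
    (b : (Fin P → Fin P → ℝ) → (Fin P → Fin P → ℝ))
    (F : (Fin P → Fin P → ℝ) → ℝ) (Φ : Fin P → Fin P → ℝ) : ℝ :=
  α * ∑ i, ∑ j, b Φ i j * fderiv ℝ F Φ (stdBasisM P i j) +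
  (1 / 2) * ∑ i, ∑ j, ∑ k, ∑ l, (Φ i k * Φ j l + Φ i l * Φ j k) *
    fderiv ℝ (fun M => fderiv ℝ F M (stdBasisM P k l)) Φ (stdBasisM P i j)

/-!
Since `ρ(1) = √0 - arccos 1 = 0` and the normalized matrix has unit diagonal, the diagonal drift
`√Φ_aa · ρ(Φ_aa / (√Φ_aa √Φ_aa)) · √Φ_aa = Φ_aa · ρ(1)` vanishes. For a test function
`F(M) = g(M_aa)` only the `(a,a)` directions survive in the generator: the drift term reduces to
`α b(Φ)_aa g'(Φ_aa)` and the diffusion term to `½ (Φ_aa Φ_aa + Φ_aa Φ_aa) g''(Φ_aa)`. So the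
matrix martingale problem restricted to such `F` is the scalar martingale problem of
`ds = √2 s dW`.
-/

lemma shapedReLU_one (cp cm : ℝ) :
    (cp - cm) ^ 2 / (2 * Real.pi) * (Real.sqrt (1 - 1 ^ 2) - 1 * Real.arccos 1) = 0 := by
  simp

lemma sqrt_mul_normalized_mul_sqrt {ρ : ℝ → ℝ} (hρ : ρ 1 = 0) {x : ℝ} (hx : 0 < x) :
    Real.sqrt x * ρ (x / (Real.sqrt x * Real.sqrt x)) * Real.sqrt x = 0 := by
  rw [Real.mul_self_sqrt hx.le, div_self hx.ne', hρ, mul_zero, zero_mul]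

section CompCLM

variable {E : Type*} [NormedAddCommGroup E] [NormedSpace ℝ E]

lemma hasFDerivAt_comp_clm (L : E →L[ℝ] ℝ) {g : ℝ → ℝ} {x : E}
    (hg : DifferentiableAt ℝ g (L x)) :
    HasFDerivAt (fun y => g (L y)) (deriv g (L x) • L) x :=
  hg.hasDerivAt.comp_hasFDerivAt x L.hasFDerivAt

lemma fderiv_comp_clm_apply (L : E →L[ℝ] ℝ) {g : ℝ → ℝ} (hg : Differentiable ℝ g)
    (x v : E) :
    fderiv ℝ (fun y => g (L y)) x v = deriv g (L x) * L v := by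
  rw [(hasFDerivAt_comp_clm L (hg (L x))).fderiv]
  rfl

lemma fderiv_fderiv_comp_clm_apply (L : E →L[ℝ] ℝ) {g : ℝ → ℝ} (hg : ContDiff ℝ 2 g)
    (x v w : E) :
    fderiv ℝ (fun y => fderiv ℝ (fun z => g (L z)) y w) x v
      = L w * (deriv (deriv g) (L x) * L v) := by
  have hg' : ContDiff ℝ (1 + 1) g := hg
  have hdg : Differentiable ℝ (deriv g) :=
    (contDiff_succ_iff_deriv.mp hg').2.2.differentiable one_ne_zero
  simp_rw [fderiv_comp_clm_apply L (hg.differentiable (by norm_num)), mul_comm _ (L w)]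
  rw [((hasFDerivAt_comp_clm L (hdg (L x))).const_mul (L w)).fderiv]
  rfl

end CompCLM

noncomputable def entryCLM (P : ℕ) (i j : Fin P) : (Fin P → Fin P → ℝ) →L[ℝ] ℝ :=
  (ContinuousLinearMap.proj j).comp
    (ContinuousLinearMap.proj (R := ℝ) (φ := fun _ : Fin P => Fin P → ℝ) i)

@[simp]
lemma entryCLM_apply (P : ℕ) (i j : Fin P) (M : Fin P → Fin P → ℝ) : entryCLM P i j M = M i j :=
  rfl

lemma matGen_comp_diagEntry (P : ℕ) (α : ℝ) (b : (Fin P → Fin P → ℝ) → (Fin P → Fin P → ℝ))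
    {g : ℝ → ℝ} (hg : ContDiff ℝ 2 g) (a : Fin P) (Φ : Fin P → Fin P → ℝ) :
    matGen P α b (fun M => g (M a a)) Φ
      = α * b Φ a a * deriv g (Φ a a) + Φ a a ^ 2 * deriv (deriv g) (Φ a a) := by
  have h1 := fderiv_comp_clm_apply (entryCLM P a a) (hg.differentiable (by norm_num)) Φ
  have h2 := fderiv_fderiv_comp_clm_apply (entryCLM P a a) hg Φ
  simp only [entryCLM_apply] at h1 h2
  simp only [matGen, h1, h2, stdBasisM, ite_and]
  simp only [mul_ite, mul_one, mul_zero, Finset.sum_ite_irrel, Finset.sum_ite_eq, Finset.mem_univ,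
    ↓reduceIte, Finset.sum_const_zero, one_div, ite_mul, one_mul, zero_mul]
  ring

theorem stmt13_general {Ω : Type*} {m0 : MeasurableSpace Ω} (μ : Measure Ω)
    (P : ℕ) (cp cm αc : ℝ)
    (ρhat : ℝ → ℝ)
    (hρhat : ∀ x, ρhat x = ((cp - cm) ^ 2 / (2 * Real.pi)) *
      (Real.sqrt (1 - x ^ 2) - x * Real.arccos x))
    (b : (Fin P → Fin P → ℝ) → (Fin P → Fin P → ℝ))
    (hb : ∀ (Φ : Fin P → Fin P → ℝ) (i j : Fin P),
      b Φ i j = Real.sqrt (Φ i i) *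
        ρhat (Φ i j / (Real.sqrt (Φ i i) * Real.sqrt (Φ j j))) * Real.sqrt (Φ j j))
    (ℱ : Filtration ℝ m0)
    (Φ : ℝ → Ω → (Fin P → Fin P → ℝ))
    (hdiagpos : ∀ t ω γ, 0 < Φ t ω γ γ)
    (hMP : ∀ F : (Fin P → Fin P → ℝ) → ℝ, ContDiff ℝ 2 F →
      Martingale
        (fun t ω => F (Φ t ω) - ∫ r in (0 : ℝ)..t, matGen P αc b F (Φ r ω)) ℱ μ)
    (a : Fin P) :
    (∀ A : Fin P → Fin P → ℝ, (∀ γ, 0 < A γ γ) → b A a a = 0) ∧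
    (∀ g : ℝ → ℝ, ContDiff ℝ 2 g →
      Martingale
        (fun t ω =>
          g (Φ t ω a a) -
            ∫ r in (0 : ℝ)..t, (Φ r ω a a) ^ 2 * deriv (deriv g) (Φ r ω a a)) ℱ μ) := by
  have hρ1 : ρhat 1 = 0 := by rw [hρhat]; exact shapedReLU_one cp cm
  have hdrift : ∀ A : Fin P → Fin P → ℝ, (∀ γ, 0 < A γ γ) → b A a a = 0 := fun A hA => by
    rw [hb]; exact sqrt_mul_normalized_mul_sqrt hρ1 (hA a)
  refine ⟨hdrift, fun g hg => ?_⟩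
  have hgen : ∀ r ω, matGen P αc b (fun M => g (M a a)) (Φ r ω)
      = Φ r ω a a ^ 2 * deriv (deriv g) (Φ r ω a a) := fun r ω => by
    rw [matGen_comp_diagEntry P αc b hg a, hdrift _ (hdiagpos r ω)]
    ring
  simpa only [hgen] using hMP (fun M => g (M a a)) (hg.comp (entryCLM P a a).contDiff)

/-- For the shaped-ReLU Neural Covariance SDE drift
`b(Φ) = D^{1/2} ρ̂(D^{-1/2} Φ D^{-1/2}) D^{1/2}` with
`ρ̂(x) = ((c₊−c₋)²/(2π))(√(1−x²) − x arccos x)` and `D = diag(Φ)`, the diagonal entries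
of the drift vanish: `b(Φ)_{αα} = 0`. Hence under the SDE
`dΦ_t = α b(Φ_t) dt + Φ_t^{1/2} dB_t Φ_t^{1/2}` (in the martingale-problem sense),
each diagonal entry `(Φ_t)_{αα}` is a driftless geometric Brownian motion
`d(Φ_t)_{αα} = √2 (Φ_t)_{αα} dW_t`, i.e. it solves the scalar martingale problem with
zero drift and diffusion coefficient `(√2 s)²/2 = s²`. -/
theorem stmt13 {Ω : Type*} {m0 : MeasurableSpace Ω} (μ : Measure Ω)
    [IsProbabilityMeasure μ]
    (P : ℕ) (cp cm αc : ℝ)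
    (ρhat : ℝ → ℝ)
    (hρhat : ∀ x, ρhat x = ((cp - cm) ^ 2 / (2 * Real.pi)) *
      (Real.sqrt (1 - x ^ 2) - x * Real.arccos x))
    (b : (Fin P → Fin P → ℝ) → (Fin P → Fin P → ℝ))
    (hb : ∀ (Φ : Fin P → Fin P → ℝ) (i j : Fin P),
      b Φ i j = Real.sqrt (Φ i i) *
        ρhat (Φ i j / (Real.sqrt (Φ i i) * Real.sqrt (Φ j j))) * Real.sqrt (Φ j j))
    (ℱ : Filtration ℝ m0)
    (Φ : ℝ → Ω → (Fin P → Fin P → ℝ))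
    (hAdapted : Adapted ℱ Φ)
    (hPSD : ∀ t ω, (∀ i j, Φ t ω i j = Φ t ω j i) ∧
      ∀ u : Fin P → ℝ, 0 ≤ ∑ i, ∑ j, u i * Φ t ω i j * u j)
    (hdiagpos : ∀ t ω γ, 0 < Φ t ω γ γ)
    (hMP : ∀ F : (Fin P → Fin P → ℝ) → ℝ, ContDiff ℝ 2 F →
      Martingale
        (fun t ω => F (Φ t ω) - ∫ r in (0 : ℝ)..t, matGen P αc b F (Φ r ω)) ℱ μ)
    (a : Fin P) :
    (∀ A : Fin P → Fin P → ℝ, (∀ γ, 0 < A γ γ) → b A a a = 0) ∧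
    (∀ g : ℝ → ℝ, ContDiff ℝ 2 g →
      Martingale
        (fun t ω =>
          g (Φ t ω a a) -
            ∫ r in (0 : ℝ)..t, (Φ r ω a a) ^ 2 * deriv (deriv g) (Φ r ω a a)) ℱ μ) :=
  stmt13_general μ P cp cm αc ρhat hρhat b hb ℱ Φ hdiagpos hMP a
end
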